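/- arXiv:2307.10531 — 4 statements merged into one kernel-verified Lean document; each statement's English description precedes it below -/
import Mathlib

section
/- (Intertwining of parallel and sequential transformations.) For a driving sequence W with 𝔠(W) = κ, define the parallel map T_W(I¹,…,I^N) = (D(W,I¹),…,D(W,I^N)) and the sequential map S_W(I¹,…,I^N) = (D(W¹,I¹),…,D(W^N,I^N)) where W¹ = W and W^i = R(W^{i-1}, I^{i-1}) for i ≥ 2. Let 𝔇(I¹,…,I^N) = (D^{(1)}(I¹), D^{(2)}(I¹,I²), …, D^{(N)}(I¹,…,I^N)). Then on N-tuples with κ < 𝔠(I¹) < ⋯ < 𝔠(I^N) one has T_W ∘ 𝔇 = 𝔇 ∘ S_W. -/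
/-!
Everything rests on a uniqueness principle. When `𝔠(W) < 𝔠(I)`, the series `J = S(W, I)`
converges, grows subexponentially to the left, and is the only positive subexponential solution
of `J_k = W_k + (W_k / I_k) J_{k-1}`: the difference of two solutions gets multiplied by
`∏ W / I`, which decays exponentially. Since `D(W, I)` and `R(W, I)` differ from `I` and `W` by
the subexponential coboundary `J_k / J_{k-1}`, they keep the Cesàro limits `𝔠(I)` and `𝔠(W)`.

For the single-step identity `D(W, D(I¹, I²)) = D(D(W, I¹), D(R(W, I¹), I²))` put
`E = S(D(W, I¹), D(R(W, I¹), I²)) · S(R(W, I¹), I²) / S(W, I¹)`. Checking recursions shows that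
`S(R(W, I¹), I²) + E` solves the one of `S(I¹, I²)` and then `S(W, I¹) · E / S(I¹, I²)` the one
of `S(W, D(I¹, I²))`. Both sides of the identity then reduce to
`I²_k S(W, I¹)_k E_k / (S(W, I¹)_{k-1} E_{k-1})`.
Induction on the number of sequences, peeling off `I¹` and replacing `W` by `R(W, I¹)`,
gives the theorem.
-/

open Filter Topology

noncomputable section

/-- Left-tail logarithmic Cesàro limit of a bi-infinite positive sequence. -/
def cesaroLim (X : ℤ → ℝ) (c : ℝ) : Prop :=
  Filter.Tendsto (fun n : ℕ => (∑ k ∈ Finset.range n, Real.log (X (-(k : ℤ)))) / (n : ℝ))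
    Filter.atTop (nhds c)

/-- The `m`-th term of the series defining `J_k = Σ_{i ≤ k} W_i ∏_{j=i+1}^k (W_j / I_j)`,
corresponding to `i = k - m`. -/
def Jterm (W I : ℤ → ℝ) (k : ℤ) (m : ℕ) : ℝ :=
  W (k - (m : ℤ)) * ∏ r ∈ Finset.range m, (W (k - (r : ℤ)) / I (k - (r : ℤ)))

/-- `S(W,I)_k = Σ_{i ≤ k} W_i ∏_{j=i+1}^k (W_j / I_j)`. -/
def Smap (W I : ℤ → ℝ) (k : ℤ) : ℝ := ∑' m : ℕ, Jterm W I k m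

/-- The update map `D(W,I)_k = I_k J_k / J_{k-1}`. -/
def Dmap (W I : ℤ → ℝ) (k : ℤ) : ℝ := I k * Smap W I k / Smap W I (k - 1)

/-- The dual-weight map `R(W,I)_k = (I_k⁻¹ + J_{k-1}⁻¹)⁻¹`. -/
def Rmap (W I : ℤ → ℝ) (k : ℤ) : ℝ := ((I k)⁻¹ + (Smap W I (k - 1))⁻¹)⁻¹

/-- The iterated update map `D^{(n+1)}(I⁰,…,Iⁿ)`. -/
def Diter : (n : ℕ) → (Fin (n + 1) → ℤ → ℝ) → ℤ → ℝ
  | 0, I => I 0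
  | n + 1, I => Dmap (I 0) (Diter n (fun i => I i.succ))

/-- The sequentially updated driving weights: `W⁰ = W`, `Wⁿ⁺¹ = R(Wⁿ, Iⁿ)`. -/
def Witer (W : ℤ → ℝ) (I : ℕ → ℤ → ℝ) : ℕ → ℤ → ℝ
  | 0 => W
  | n + 1 => Rmap (Witer W I n) (I n)

open Real

lemma tendsto_add_div_natCast_add {f : ℕ → ℝ} {c : ℝ}
    (h : Tendsto (fun m : ℕ => f m / m) atTop (𝓝 c)) (a : ℝ) (i j : ℕ) :
    Tendsto (fun m : ℕ => (f (m + j) + a) / ((m : ℝ) + i)) atTop (𝓝 c) := by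
  have hf : Tendsto (fun m : ℕ => f (m + j) / ((m + j : ℕ) : ℝ)) atTop (𝓝 c) :=
    (tendsto_add_atTop_iff_nat j).2 h
  have hden : Tendsto (fun m : ℕ => (m : ℝ) + i) atTop atTop :=
    tendsto_atTop_add_const_right _ _ tendsto_natCast_atTop_atTop
  have hratio : Tendsto (fun m : ℕ => ((m + j : ℕ) : ℝ) / ((m : ℝ) + i)) atTop (𝓝 1) := by
    have := tendsto_const_nhds (x := (1:ℝ)).add
      ((tendsto_const_nhds (x := (j:ℝ) - i)).div_atTop hden)
    rw [add_zero] at this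
    refine this.congr' ?_
    filter_upwards [eventually_ge_atTop 1] with m hm
    have : (m : ℝ) + i ≠ 0 := by positivity
    field_simp
    push_cast
    ring
  have := (hf.mul hratio).add ((tendsto_const_nhds (x := a)).div_atTop hden)
  rw [mul_one, add_zero] at this
  refine this.congr' ?_
  filter_upwards [eventually_ge_atTop 1] with m hm
  have : ((m + j : ℕ) : ℝ) ≠ 0 := by positivity
  have : (m : ℝ) + i ≠ 0 := by positivity
  field_simp

section LogGrowth

variable {f : ℕ → ℝ} {L : ℝ}

lemma eventually_le_exp_pow_of_tendsto_log_div (hf : ∀ m, 0 < f m)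
    (h : Tendsto (fun m : ℕ => log (f m) / m) atTop (𝓝 L)) {L' : ℝ} (hL' : L < L') :
    ∀ᶠ m in atTop, f m ≤ exp L' ^ m := by
  filter_upwards [h.eventually_lt_const hL', eventually_ge_atTop 1] with m hlt hm
  have hm' : (0 : ℝ) < m := by exact_mod_cast hm
  rw [← exp_nat_mul, ← exp_log (hf m), exp_le_exp, mul_comm]
  exact ((div_lt_iff₀ hm').1 hlt).le

lemma summable_of_tendsto_log_div (hf : ∀ m, 0 < f m) (hL : L < 0)
    (h : Tendsto (fun m : ℕ => log (f m) / m) atTop (𝓝 L)) : Summable f := by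
  refine Summable.of_norm_bounded_eventually_nat
    (summable_geometric_of_lt_one (exp_pos _).le (exp_lt_one_iff.2 (by linarith : L / 2 < 0))) ?_
  filter_upwards [eventually_le_exp_pow_of_tendsto_log_div hf h (by linarith : L < L / 2)]
    with m hm
  rwa [Real.norm_of_nonneg (hf m).le]

lemma eventually_log_tsum_tail_le (hf : ∀ m, 0 < f m)
    (h : Tendsto (fun m : ℕ => log (f m) / m) atTop (𝓝 L)) {L' : ℝ} (hLL' : L < L')
    (hL'0 : L' < 0) :
    ∀ᶠ n in atTop, log (∑' l, f (n + l)) ≤ L' * n + log (1 - exp L')⁻¹ := by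
  set q := exp L'
  have hq0 : 0 ≤ q := (exp_pos _).le
  have hq1 : q < 1 := exp_lt_one_iff.2 hL'0
  have hsum := summable_of_tendsto_log_div hf (hLL'.trans hL'0) h
  obtain ⟨N, hN⟩ := eventually_atTop.1 (eventually_le_exp_pow_of_tendsto_log_div hf h hLL')
  filter_upwards [eventually_ge_atTop N] with n hn
  have hle : ∑' l, f (n + l) ≤ q ^ n * (1 - q)⁻¹ := by
    rw [← tsum_geometric_of_lt_one hq0 hq1, ← tsum_mul_left]
    refine (hsum.comp_injective (add_right_injective n)).tsum_le_tsum (fun l => ?_)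
      ((summable_geometric_of_lt_one hq0 hq1).mul_left _)
    rw [← pow_add]
    exact hN _ (by omega)
  have htail_pos : 0 < ∑' l, f (n + l) :=
    (hsum.comp_injective (add_right_injective n)).tsum_pos (fun l => (hf _).le) 0 (hf _)
  calc log (∑' l, f (n + l)) ≤ log (q ^ n * (1 - q)⁻¹) := log_le_log htail_pos hle
    _ = L' * n + log (1 - q)⁻¹ := by
      rw [log_mul (by positivity) (inv_pos.2 (sub_pos.2 hq1)).ne', log_pow, log_exp, mul_comm]

lemma tendsto_log_tsum_tail_div (hf : ∀ m, 0 < f m) (hL : L < 0)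
    (h : Tendsto (fun m : ℕ => log (f m) / m) atTop (𝓝 L)) :
    Tendsto (fun n : ℕ => log (∑' l, f (n + l)) / n) atTop (𝓝 L) := by
  refine tendsto_order.2 ⟨fun a ha => ?_, fun b hb => ?_⟩
  · filter_upwards [h.eventually_const_lt ha] with n hlt
    have hle : f n ≤ ∑' l, f (n + l) :=
      ((summable_of_tendsto_log_div hf hL h).comp_injective (add_right_injective n)).le_tsum 0
        fun l _ => (hf _).le
    exact hlt.trans_le
      (div_le_div_of_nonneg_right (log_le_log (hf n) hle) (Nat.cast_nonneg n))
  · obtain ⟨L', hLL', hL'⟩ := exists_between (lt_min hb hL)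
    obtain ⟨hL'b, hL'0⟩ := lt_min_iff.1 hL'
    have hlim : Tendsto (fun n : ℕ => L' + log (1 - exp L')⁻¹ / n) atTop (𝓝 L') := by
      simpa only [add_zero] using
        tendsto_const_nhds.add (tendsto_const_div_atTop_nhds_zero_nat (log (1 - exp L')⁻¹))
    filter_upwards [eventually_log_tsum_tail_le hf h hLL' hL'0, hlim.eventually_lt_const hL'b,
      eventually_ge_atTop 1] with n hbound hlt hn
    have hn' : (0 : ℝ) < n := by exact_mod_cast hn
    calc log (∑' l, f (n + l)) / n ≤ (L' * n + log (1 - exp L')⁻¹) / n :=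
          div_le_div_of_nonneg_right hbound hn'.le
      _ = L' + log (1 - exp L')⁻¹ / n := by field_simp
      _ < b := hlt

lemma tendsto_zero_of_tendsto_log_div (hf : ∀ m, 0 < f m) (hL : L < 0)
    (h : Tendsto (fun m : ℕ => log (f m) / m) atTop (𝓝 L)) : Tendsto f atTop (𝓝 0) :=
  (summable_of_tendsto_log_div hf hL h).tendsto_atTop_zero

end LogGrowth

def leftLogSum (X : ℤ → ℝ) (k : ℤ) (m : ℕ) : ℝ :=
  ∑ r ∈ Finset.range m, log (X (k - r))

lemma leftLogSum_succ (X : ℤ → ℝ) (k : ℤ) (m : ℕ) :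
    leftLogSum X k (m + 1) = leftLogSum X k m + log (X (k - m)) :=
  Finset.sum_range_succ _ m

lemma leftLogSum_succ' (X : ℤ → ℝ) (k : ℤ) (m : ℕ) :
    leftLogSum X k (m + 1) = log (X k) + leftLogSum X (k - 1) m := by
  rw [leftLogSum, Finset.sum_range_succ', add_comm, leftLogSum]
  congr 1
  · simp
  · refine Finset.sum_congr rfl fun r _ => ?_
    push_cast
    ring_nf

lemma tendsto_leftLogSum_div {X : ℤ → ℝ} {c : ℝ} (h : cesaroLim X c) (k : ℤ) :
    Tendsto (fun m : ℕ => leftLogSum X k m / m) atTop (𝓝 c) := by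
  induction k using Int.induction_on with
  | zero => simpa [leftLogSum, cesaroLim] using h
  | succ k ih =>
    rw [← tendsto_add_atTop_iff_nat 1]
    have := tendsto_add_div_natCast_add ih (log (X (k + 1))) 1 0
    simpa [leftLogSum_succ', add_comm] using this
  | pred k ih =>
    have := tendsto_add_div_natCast_add ih (-log (X (-k))) 0 1
    simpa [leftLogSum_succ', sub_eq_add_neg] using this

def SubexpLeft (Y : ℤ → ℝ) : Prop :=
  ∀ k : ℤ, Tendsto (fun m : ℕ => log (Y (k - m)) / m) atTop (𝓝 0)

namespace SubexpLeft

variable {Y Z : ℤ → ℝ}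

lemma of_cesaroLim {c : ℝ} (h : cesaroLim Y c) : SubexpLeft Y := by
  intro k
  have := (tendsto_add_div_natCast_add (tendsto_leftLogSum_div h k) 0 0 1).sub
    (tendsto_leftLogSum_div h k)
  rw [sub_self] at this
  refine this.congr fun m => ?_
  rw [leftLogSum_succ]
  push_cast
  ring

lemma inv (hY : SubexpLeft Y) : SubexpLeft fun k => (Y k)⁻¹ := fun k => by
  simpa [neg_div] using (hY k).neg

lemma mul (hY₀ : ∀ k, 0 < Y k) (hZ₀ : ∀ k, 0 < Z k) (hY : SubexpLeft Y) (hZ : SubexpLeft Z) :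
    SubexpLeft fun k => Y k * Z k := fun k => by
  simpa [log_mul (hY₀ _).ne' (hZ₀ _).ne', add_div] using (hY k).add (hZ k)

lemma add (hY₀ : ∀ k, 0 < Y k) (hZ₀ : ∀ k, 0 < Z k) (hY : SubexpLeft Y) (hZ : SubexpLeft Z) :
    SubexpLeft fun k => Y k + Z k := fun k => by
  -- `log Y ≤ log (Y + Z) ≤ log 2 + max (log Y) (log Z)`
  have hupper : Tendsto (fun m : ℕ => log 2 / m + max (log (Y (k - m)) / m) (log (Z (k - m)) / m))
      atTop (𝓝 0) := by
    simpa using (tendsto_const_div_atTop_nhds_zero_nat (log 2)).add ((hY k).max (hZ k))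
  refine tendsto_of_tendsto_of_tendsto_of_le_of_le (hY k) hupper (fun m => ?_) (fun m => ?_)
  · exact div_le_div_of_nonneg_right
      (log_le_log (hY₀ _) (le_add_of_nonneg_right (hZ₀ _).le)) (Nat.cast_nonneg m)
  · rw [max_div_div_right (Nat.cast_nonneg m), ← add_div]
    refine div_le_div_of_nonneg_right ?_ (Nat.cast_nonneg m)
    have hmax : Y (k - m) + Z (k - m) ≤ 2 * max (Y (k - m)) (Z (k - m)) := by
      linarith [le_max_left (Y (k - m)) (Z (k - m)), le_max_right (Y (k - m)) (Z (k - m))]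
    calc log (Y (k - m) + Z (k - m)) ≤ log (2 * max (Y (k - m)) (Z (k - m))) :=
          log_le_log (add_pos (hY₀ _) (hZ₀ _)) hmax
      _ = log 2 + max (log (Y (k - m))) (log (Z (k - m))) := by
          rw [log_mul two_ne_zero (lt_max_of_lt_left (hY₀ _)).ne',
            strictMonoOn_log.monotoneOn.map_max (hY₀ _) (hZ₀ _)]

end SubexpLeft

/-- A positive sequence with `𝔠(X) = c`. -/
structure PosCesaro (X : ℤ → ℝ) (c : ℝ) : Prop where
  pos : ∀ k, 0 < X k
  cesaro : cesaroLim X c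

def leftRatioProd (X Z : ℤ → ℝ) (k : ℤ) (m : ℕ) : ℝ :=
  ∏ r ∈ Finset.range m, X (k - r) / Z (k - r)

section RatioProd

variable {X Z : ℤ → ℝ} {a b : ℝ}

lemma leftRatioProd_pos (hX : ∀ k, 0 < X k) (hZ : ∀ k, 0 < Z k) (k : ℤ) (m : ℕ) :
    0 < leftRatioProd X Z k m :=
  Finset.prod_pos fun _ _ => div_pos (hX _) (hZ _)

lemma tendsto_log_leftRatioProd_div (hX : PosCesaro X a) (hZ : PosCesaro Z b) (k : ℤ) :
    Tendsto (fun m : ℕ => log (leftRatioProd X Z k m) / m) atTop (𝓝 (a - b)) := by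
  refine ((tendsto_leftLogSum_div hX.cesaro k).sub (tendsto_leftLogSum_div hZ.cesaro k)).congr
    fun m => ?_
  rw [leftRatioProd, log_prod fun r _ => (div_pos (hX.pos _) (hZ.pos _)).ne', ← sub_div,
    leftLogSum, leftLogSum, ← Finset.sum_sub_distrib]
  congr 1
  exact Finset.sum_congr rfl fun r _ => (log_div (hX.pos _).ne' (hZ.pos _).ne').symm

lemma tendsto_leftRatioProd_mul_zero (hX : PosCesaro X a) (hZ : PosCesaro Z b) (hab : a < b)
    {Y : ℤ → ℝ} (hY₀ : ∀ k, 0 < Y k) (hY : SubexpLeft Y) (k : ℤ) :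
    Tendsto (fun m : ℕ => leftRatioProd X Z k m * Y (k - m)) atTop (𝓝 0) := by
  refine tendsto_zero_of_tendsto_log_div
    (fun m => mul_pos (leftRatioProd_pos hX.pos hZ.pos k m) (hY₀ _))
    (by linarith : a - b + 0 < 0) ?_
  refine ((tendsto_log_leftRatioProd_div hX hZ k).add (hY k)).congr fun m => ?_
  rw [log_mul (leftRatioProd_pos hX.pos hZ.pos k m).ne' (hY₀ _).ne', add_div]

lemma eq_leftRatioProd_mul_of_forall_eq {f : ℤ → ℝ} (h : ∀ k, f k = X k / Z k * f (k - 1))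
    (k : ℤ) (m : ℕ) : f k = leftRatioProd X Z k m * f (k - m) := by
  induction m with
  | zero => simp [leftRatioProd]
  | succ m ih =>
    rw [ih, leftRatioProd, leftRatioProd, Finset.prod_range_succ, h (k - m)]
    push_cast
    ring_nf

end RatioProd

lemma jterm_eq (W I : ℤ → ℝ) (k : ℤ) (m : ℕ) :
    Jterm W I k m = W (k - m) * leftRatioProd W I k m := rfl

lemma jterm_add (W I : ℤ → ℝ) (k : ℤ) (n l : ℕ) :
    Jterm W I k (n + l) = leftRatioProd W I k n * Jterm W I (k - n) l := by
  rw [jterm_eq, jterm_eq, leftRatioProd, leftRatioProd, leftRatioProd, Finset.prod_range_add]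
  push_cast
  ring_nf

lemma cesaroLim_of_log_eq {X Y G : ℤ → ℝ} {c : ℝ} (hY : cesaroLim Y c)
    (hG : Tendsto (fun n : ℕ => G (-n) / n) atTop (𝓝 0))
    (hX : ∀ k, log (X k) = log (Y k) + (G k - G (k - 1))) : cesaroLim X c := by
  unfold cesaroLim at hY ⊢
  have htelescope : ∀ n : ℕ, ∑ r ∈ Finset.range n, log (X (-r))
      = ∑ r ∈ Finset.range n, log (Y (-r)) + (G 0 - G (-n)) := by
    intro n
    rw [Finset.sum_congr rfl fun (r : ℕ) _ => hX (-(r : ℤ)), Finset.sum_add_distrib]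
    congr 1
    simpa [neg_add, sub_eq_add_neg, add_comm] using
      Finset.sum_range_sub' (fun r : ℕ => G (-(r : ℤ))) n
  have := (hY.add (tendsto_const_div_atTop_nhds_zero_nat (G 0))).sub hG
  rw [add_zero, sub_zero] at this
  refine this.congr fun n => ?_
  rw [htelescope]
  ring

lemma jterm_pos {W I : ℤ → ℝ} (hW : ∀ k, 0 < W k) (hI : ∀ k, 0 < I k) (k : ℤ) (m : ℕ) :
    0 < Jterm W I k m :=
  mul_pos (hW _) (leftRatioProd_pos hW hI k m)

section Smap

variable {W I : ℤ → ℝ} {κ c : ℝ} (hW : PosCesaro W κ) (hI : PosCesaro I c) (hκc : κ < c)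
include hW hI

lemma tendsto_log_jterm_div (k : ℤ) :
    Tendsto (fun m : ℕ => log (Jterm W I k m) / m) atTop (𝓝 (κ - c)) := by
  rw [← zero_add (κ - c)]
  refine ((SubexpLeft.of_cesaroLim hW.cesaro k).add
    (tendsto_log_leftRatioProd_div hW hI k)).congr fun m => ?_
  rw [jterm_eq, log_mul (hW.pos _).ne' (leftRatioProd_pos hW.pos hI.pos k m).ne', add_div]

lemma smap_sub_eq (k : ℤ) (n : ℕ) :
    Smap W I (k - n) = (leftRatioProd W I k n)⁻¹ * ∑' l, Jterm W I k (n + l) := by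
  rw [Smap, ← tsum_mul_left]
  refine tsum_congr fun l => ?_
  rw [jterm_add, inv_mul_cancel_left₀ (leftRatioProd_pos hW.pos hI.pos k n).ne']

include hκc

lemma summable_jterm (k : ℤ) : Summable (Jterm W I k) :=
  summable_of_tendsto_log_div (jterm_pos hW.pos hI.pos k) (sub_neg.2 hκc)
    (tendsto_log_jterm_div hW hI k)

lemma smap_pos (k : ℤ) : 0 < Smap W I k :=
  (summable_jterm hW hI hκc k).tsum_pos (fun m => (jterm_pos hW.pos hI.pos k m).le) 0
    (by simpa [Jterm] using hW.pos k)

lemma smap_eq_add (k : ℤ) : Smap W I k = W k + W k / I k * Smap W I (k - 1) := by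
  rw [Smap, (summable_jterm hW hI hκc k).tsum_eq_zero_add, Smap, ← tsum_mul_left]
  congr 1
  · simp [Jterm]
  · refine tsum_congr fun l => ?_
    rw [add_comm, jterm_add]
    simp [leftRatioProd]

/-- Going left by `n`, the tail `∑_{m ≥ n} Jterm k m ≈ e^{(κ - c) n}` and the prefactor
`(leftRatioProd W I k n)⁻¹ ≈ e^{(c - κ) n}` cancel to first order. -/
lemma subexpLeft_smap : SubexpLeft (Smap W I) := fun k => by
  have := (tendsto_log_tsum_tail_div (jterm_pos hW.pos hI.pos k) (sub_neg.2 hκc)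
    (tendsto_log_jterm_div hW hI k)).sub (tendsto_log_leftRatioProd_div hW hI k)
  rw [sub_self] at this
  refine this.congr fun n => ?_
  have htail : 0 < ∑' l, Jterm W I k (n + l) :=
    ((summable_jterm hW hI hκc k).comp_injective (add_right_injective n)).tsum_pos
      (fun l => (jterm_pos hW.pos hI.pos k _).le) 0 (jterm_pos hW.pos hI.pos k _)
  rw [smap_sub_eq hW hI, log_mul (inv_pos.2 (leftRatioProd_pos hW.pos hI.pos k n)).ne'
    htail.ne', log_inv]
  ring

lemma eq_smap_of_forall_eq {Y : ℤ → ℝ} (hY₀ : ∀ k, 0 < Y k) (hY : SubexpLeft Y)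
    (hrec : ∀ k, Y k = W k + W k / I k * Y (k - 1)) : Y = Smap W I := by
  funext k
  have hdiff : ∀ j, Y j - Smap W I j = W j / I j * (Y (j - 1) - Smap W I (j - 1)) := by
    intro j
    rw [hrec j, smap_eq_add hW hI hκc j]
    ring
  have hbound : ∀ m : ℕ, |Y k - Smap W I k|
      ≤ leftRatioProd W I k m * Y (k - m) + leftRatioProd W I k m * Smap W I (k - m) := by
    intro m
    have hS := smap_pos hW hI hκc (k - m)
    rw [eq_leftRatioProd_mul_of_forall_eq hdiff k m, abs_mul,
      abs_of_pos (leftRatioProd_pos hW.pos hI.pos k m), ← mul_add]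
    exact mul_le_mul_of_nonneg_left
      (abs_le.2 ⟨by linarith [hY₀ (k - m)], by linarith [hY₀ (k - m)]⟩)
      (leftRatioProd_pos hW.pos hI.pos k m).le
  have hlim := (tendsto_leftRatioProd_mul_zero hW hI hκc hY₀ hY k).add
    (tendsto_leftRatioProd_mul_zero hW hI hκc (smap_pos hW hI hκc) (subexpLeft_smap hW hI hκc) k)
  rw [add_zero] at hlim
  exact sub_eq_zero.1 (abs_nonpos_iff.1 (ge_of_tendsto' hlim hbound))

lemma rmap_eq (k : ℤ) : Rmap W I k = W k * Smap W I (k - 1) / Smap W I k := by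
  have hS := smap_pos hW hI hκc (k - 1)
  have hIk := hI.pos k
  have hWk := hW.pos k
  rw [Rmap, smap_eq_add hW hI hκc k]
  field_simp
  ring

lemma PosCesaro.dmap : PosCesaro (Dmap W I) c where
  pos k := by
    have := smap_pos hW hI hκc k
    have := smap_pos hW hI hκc (k - 1)
    have := hI.pos k
    unfold Dmap
    positivity
  cesaro := cesaroLim_of_log_eq (G := fun k => log (Smap W I k)) hI.cesaro
    (by simpa using subexpLeft_smap hW hI hκc 0) fun k => by
      rw [Dmap, log_div (mul_pos (hI.pos k) (smap_pos hW hI hκc k)).ne'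
        (smap_pos hW hI hκc _).ne', log_mul (hI.pos k).ne' (smap_pos hW hI hκc k).ne']
      ring

lemma PosCesaro.rmap : PosCesaro (Rmap W I) κ where
  pos k := by
    have := smap_pos hW hI hκc (k - 1)
    have := hI.pos k
    unfold Rmap
    positivity
  cesaro := cesaroLim_of_log_eq (G := fun k => -log (Smap W I k)) hW.cesaro
    (by simpa [neg_div] using (subexpLeft_smap hW hI hκc 0).neg) fun k => by
      rw [rmap_eq hW hI hκc, log_div (mul_pos (hW.pos k) (smap_pos hW hI hκc _)).ne'
        (smap_pos hW hI hκc _).ne', log_mul (hW.pos k).ne' (smap_pos hW hI hκc _).ne']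
      ring

end Smap

/-- The defect `S(I₁, I₂) - S(R(W, I₁), I₂)`, in a manifestly positive form. -/
def smapDefect (W I₁ I₂ : ℤ → ℝ) (k : ℤ) : ℝ :=
  Smap (Dmap W I₁) (Dmap (Rmap W I₁) I₂) k * Smap (Rmap W I₁) I₂ k / Smap W I₁ k

section OneStep

variable {W I₁ I₂ : ℤ → ℝ} {κ c₁ c₂ : ℝ} (hW : PosCesaro W κ) (h₁ : PosCesaro I₁ c₁)
  (h₂ : PosCesaro I₂ c₂) (hκ : κ < c₁) (h₁₂ : c₁ < c₂)
include hW h₁ h₂ hκ h₁₂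

lemma smapDefect_pos (k : ℤ) : 0 < smapDefect W I₁ I₂ k := by
  have hR := hW.rmap h₁ hκ
  have := smap_pos (hW.dmap h₁ hκ) (hR.dmap h₂ (hκ.trans h₁₂)) h₁₂ k
  have := smap_pos hR h₂ (hκ.trans h₁₂) k
  have := smap_pos hW h₁ hκ k
  unfold smapDefect
  positivity

lemma subexpLeft_smapDefect : SubexpLeft (smapDefect W I₁ I₂) := by
  have hR := hW.rmap h₁ hκ
  have hU := hW.dmap h₁ hκ
  have hV := hR.dmap h₂ (hκ.trans h₁₂)
  show SubexpLeft fun k => smapDefect W I₁ I₂ k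
  simpa only [smapDefect, div_eq_mul_inv] using
    ((subexpLeft_smap hU hV h₁₂).mul (smap_pos hU hV h₁₂) (smap_pos hR h₂ (hκ.trans h₁₂))
      (subexpLeft_smap hR h₂ (hκ.trans h₁₂))).mul
      (fun k => mul_pos (smap_pos hU hV h₁₂ k) (smap_pos hR h₂ (hκ.trans h₁₂) k))
      (fun k => inv_pos.2 (smap_pos hW h₁ hκ k)) (subexpLeft_smap hW h₁ hκ).inv

lemma smapDefect_eq_add (k : ℤ) :
    smapDefect W I₁ I₂ k = I₁ k * Smap (Rmap W I₁) I₂ k / Smap W I₁ (k - 1)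
      + I₁ k / I₂ k * smapDefect W I₁ I₂ (k - 1) := by
  have hR := hW.rmap h₁ hκ
  have hU := hW.dmap h₁ hκ
  have hV := hR.dmap h₂ (hκ.trans h₁₂)
  have := smap_pos hW h₁ hκ k
  have := smap_pos hW h₁ hκ (k - 1)
  have := smap_pos hR h₂ (hκ.trans h₁₂) k
  have := smap_pos hR h₂ (hκ.trans h₁₂) (k - 1)
  have := h₁.pos k
  have := h₂.pos k
  simp only [smapDefect]
  rw [smap_eq_add hU hV h₁₂ k, Dmap, Dmap]
  field_simp

lemma smap_eq_add_smapDefect :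
    Smap I₁ I₂ = fun k => Smap (Rmap W I₁) I₂ k + smapDefect W I₁ I₂ k := by
  have hR := hW.rmap h₁ hκ
  refine (eq_smap_of_forall_eq h₁ h₂ h₁₂ (fun k => ?_) ?_ fun k => ?_).symm
  · exact add_pos (smap_pos hR h₂ (hκ.trans h₁₂) k) (smapDefect_pos hW h₁ h₂ hκ h₁₂ k)
  · exact (subexpLeft_smap hR h₂ (hκ.trans h₁₂)).add (smap_pos hR h₂ (hκ.trans h₁₂))
      (smapDefect_pos hW h₁ h₂ hκ h₁₂) (subexpLeft_smapDefect hW h₁ h₂ hκ h₁₂)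
  · have := smap_pos hW h₁ hκ (k - 1)
    have := h₁.pos k
    have := h₂.pos k
    rw [smapDefect_eq_add hW h₁ h₂ hκ h₁₂ k, smap_eq_add hR h₂ (hκ.trans h₁₂) k, Rmap]
    field_simp
    ring

lemma smap_dmap_eq :
    Smap W (Dmap I₁ I₂) = fun k => Smap W I₁ k * smapDefect W I₁ I₂ k / Smap I₁ I₂ k := by
  refine (eq_smap_of_forall_eq hW (h₁.dmap h₂ h₁₂) (hκ.trans h₁₂) (fun k => ?_) ?_
    fun k => ?_).symm
  · have := smap_pos hW h₁ hκ k
    have := smap_pos h₁ h₂ h₁₂ k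
    have := smapDefect_pos hW h₁ h₂ hκ h₁₂ k
    positivity
  · simpa only [div_eq_mul_inv] using
      ((subexpLeft_smap hW h₁ hκ).mul (smap_pos hW h₁ hκ) (smapDefect_pos hW h₁ h₂ hκ h₁₂)
        (subexpLeft_smapDefect hW h₁ h₂ hκ h₁₂)).mul
        (fun k => mul_pos (smap_pos hW h₁ hκ k) (smapDefect_pos hW h₁ h₂ hκ h₁₂ k))
        (fun k => inv_pos.2 (smap_pos h₁ h₂ h₁₂ k)) (subexpLeft_smap h₁ h₂ h₁₂).inv
  · have := smap_pos hW h₁ hκ (k - 1)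
    have := smap_pos h₁ h₂ h₁₂ k
    have := smap_pos h₁ h₂ h₁₂ (k - 1)
    have := smapDefect_pos hW h₁ h₂ hκ h₁₂ (k - 1)
    have := h₁.pos k
    have := h₂.pos k
    have hA := congrFun (smap_eq_add_smapDefect hW h₁ h₂ hκ h₁₂) k
    rw [smap_eq_add hW h₁ hκ k, smapDefect_eq_add hW h₁ h₂ hκ h₁₂ k, Dmap]
    rw [smapDefect_eq_add hW h₁ h₂ hκ h₁₂ k] at hA
    field_simp at hA ⊢
    linear_combination (-W k) * hA

theorem dmap_dmap_eq : Dmap W (Dmap I₁ I₂) = Dmap (Dmap W I₁) (Dmap (Rmap W I₁) I₂) := by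
  have hR := hW.rmap h₁ hκ
  have hT : ∀ j, Smap (Dmap W I₁) (Dmap (Rmap W I₁) I₂) j
      = smapDefect W I₁ I₂ j * Smap W I₁ j / Smap (Rmap W I₁) I₂ j := fun j => by
    have := smap_pos hW h₁ hκ j
    have := smap_pos hR h₂ (hκ.trans h₁₂) j
    rw [smapDefect]
    field_simp
  funext k
  have := smap_pos hW h₁ hκ k
  have := smap_pos hW h₁ hκ (k - 1)
  have := smap_pos hR h₂ (hκ.trans h₁₂) k
  have := smap_pos hR h₂ (hκ.trans h₁₂) (k - 1)
  have := smap_pos h₁ h₂ h₁₂ k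
  have := smap_pos h₁ h₂ h₁₂ (k - 1)
  have := smapDefect_pos hW h₁ h₂ hκ h₁₂ k
  have := smapDefect_pos hW h₁ h₂ hκ h₁₂ (k - 1)
  have := h₂.pos k
  rw [Dmap, smap_dmap_eq hW h₁ h₂ hκ h₁₂, Dmap.eq_1 (Dmap W I₁), hT, hT]
  simp only [Dmap]
  field_simp

end OneStep

lemma PosCesaro.diter : ∀ (n : ℕ) {I : Fin (n + 1) → ℤ → ℝ} {γ : Fin (n + 1) → ℝ},
    (∀ j, PosCesaro (I j) (γ j)) → StrictMono γ → PosCesaro (Diter n I) (γ (Fin.last n))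
  | 0, _, _, hI, _ => hI 0
  | n + 1, I, γ, hI, hγ => by
    have hinner := PosCesaro.diter n (I := fun j => I j.succ) (fun j => hI j.succ)
      (hγ.comp (Fin.strictMono_succ))
    rw [Fin.succ_last] at hinner
    exact (hI 0).dmap hinner (hγ (Fin.last_pos))

lemma witer_succ (W : ℤ → ℝ) (I : ℕ → ℤ → ℝ) (n : ℕ) :
    Witer W I (n + 1) = Witer (Rmap W (I 0)) (fun j => I (j + 1)) n := by
  induction n with
  | zero => rfl
  | succ n ih => rw [Witer, ih, Witer]

theorem dmap_diter_eq (i : ℕ) : ∀ {W : ℤ → ℝ} {I : ℕ → ℤ → ℝ} {κ : ℝ} {c : ℕ → ℝ},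
    PosCesaro W κ → (∀ n, PosCesaro (I n) (c n)) → κ < c 0 → StrictMono c →
    Dmap W (Diter i fun j : Fin (i + 1) => I j)
      = Diter i fun j : Fin (i + 1) => Dmap (Witer W I j) (I j) := by
  induction i with
  | zero => intros; rfl
  | succ i ih =>
    intro W I κ c hW hI hκ hc
    have hZ := PosCesaro.diter i (I := fun j : Fin (i + 1) => I (j + 1)) (fun j => hI _)
      (hc.comp (strictMono_id.add_const 1) |>.comp Fin.val_strictMono)
    calc Dmap W (Diter (i + 1) fun j => I j)
        = Dmap W (Dmap (I 0) (Diter i fun j : Fin (i + 1) => I (j + 1))) := rfl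
      _ = Dmap (Dmap W (I 0)) (Dmap (Rmap W (I 0)) (Diter i fun j : Fin (i + 1) => I (j + 1))) :=
        dmap_dmap_eq hW (hI 0) hZ hκ (hc (by simp))
      _ = Dmap (Dmap W (I 0)) (Diter i fun j : Fin (i + 1) =>
            Dmap (Witer (Rmap W (I 0)) (fun n => I (n + 1)) j) (I (j + 1))) := by
        rw [ih (hW.rmap (hI 0) hκ) (fun n => hI (n + 1)) (hκ.trans (hc (by simp)))
          (hc.comp (strictMono_id.add_const 1))]
      _ = Diter (i + 1) fun j => Dmap (Witer W I j) (I j) := by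
        simp only [← witer_succ]
        rfl

theorem stmt9 (W : ℤ → ℝ) (I : ℕ → ℤ → ℝ) (κ : ℝ) (c : ℕ → ℝ)
    (hW : ∀ k, 0 < W k) (hI : ∀ i k, 0 < I i k)
    (hcW : cesaroLim W κ) (hcI : ∀ i, cesaroLim (I i) (c i))
    (hκ : κ < c 0) (hmono : StrictMono c) :
    ∀ (i : ℕ) (k : ℤ),
      Dmap W (Diter i (fun j : Fin (i + 1) => I (j : ℕ))) k
        = Diter i (fun j : Fin (i + 1) => Dmap (Witer W I (j : ℕ)) (I (j : ℕ))) k := fun i =>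
  congrFun (dmap_diter_eq i ⟨hW, hcW⟩ (fun n => ⟨hI n, hcI n⟩) hκ hmono)
end
end

section
/- (Trigamma comparison of direction bijections.) Let ψ₁(x) = Σ_{k≥0} 1/(k+x)² be the trigamma function, so that x^{-2} ≤ ψ₁(x) ≤ x^{-2}(1 + b x²) for all x > 0 with b = π²/6. For α > 0 and ρ ∈ (0,1), define f^α(ρ) = ψ₁(αρ)/(ψ₁(α(1−ρ)) + ψ₁(αρ)) and f⁰(ρ) = (1−ρ)²/(ρ² + (1−ρ)²). Then sup_{ρ∈(0,1)} |f^α(ρ) − f⁰(ρ)| ≤ (π²/3) α² for every α > 0. -/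
set_option maxHeartbeats 1000000

noncomputable section

/-- The trigamma function `ψ₁(x) = Σ_{k≥0} 1/(k+x)²`. -/
def trigamma (x : ℝ) : ℝ := ∑' k : ℕ, 1 / ((k : ℝ) + x) ^ 2

lemma base_summable : Summable (fun k : ℕ => 1 / ((k : ℝ) + 1) ^ 2) := by
  have h := Real.summable_one_div_nat_pow.mpr (one_lt_two (α := ℕ))
  have h2 := (summable_nat_add_iff (f := fun n : ℕ => 1 / (n : ℝ) ^ 2) 1).2 h
  exact h2.congr (fun k => by push_cast; ring_nf)

lemma shift_summable {x : ℝ} (hx : 0 ≤ x) :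
    Summable (fun k : ℕ => 1 / ((k : ℝ) + 1 + x) ^ 2) := by
  apply Summable.of_nonneg_of_le (fun k => by positivity) _ base_summable
  intro k
  apply one_div_le_one_div_of_le (by positivity)
  nlinarith [Nat.cast_nonneg (α := ℝ) k]

lemma trigamma_summable {x : ℝ} (hx : 0 < x) :
    Summable (fun k : ℕ => 1 / ((k : ℝ) + x) ^ 2) := by
  apply (summable_nat_add_iff (f := fun k : ℕ => 1 / ((k : ℝ) + x) ^ 2) 1).1
  exact (shift_summable hx.le).congr (fun k => by push_cast; ring_nf)

lemma basel_succ : ∑' k : ℕ, 1 / ((k : ℝ) + 1) ^ 2 = Real.pi ^ 2 / 6 := by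
  have h := hasSum_zeta_two
  have := h.tsum_eq
  rw [Summable.tsum_eq_zero_add h.summable] at this
  simpa using this

lemma trigamma_bounds {x : ℝ} (hx : 0 < x) :
    1 / x ^ 2 ≤ trigamma x ∧ trigamma x ≤ 1 / x ^ 2 + Real.pi ^ 2 / 6 := by
  have hs := trigamma_summable hx
  constructor
  · have := Summable.le_tsum hs 0 (fun k _ => by positivity)
    simpa [trigamma] using this
  · rw [trigamma, Summable.tsum_eq_zero_add hs]
    simp only [Nat.cast_zero, zero_add, Nat.cast_add, Nat.cast_one]
    have hle : ∑' k : ℕ, 1 / ((k : ℝ) + 1 + x) ^ 2 ≤ ∑' k : ℕ, 1 / ((k : ℝ) + 1) ^ 2 := by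
      apply Summable.tsum_le_tsum _ (shift_summable hx.le) base_summable
      intro k
      apply one_div_le_one_div_of_le (by positivity)
      nlinarith [Nat.cast_nonneg (α := ℝ) k]
    rw [basel_succ] at hle
    linarith

lemma key (A C a c b : ℝ) (hA : 0 < A) (hC : 0 < C) (hb : 0 ≤ b)
    (h1 : A ≤ a) (h2 : a ≤ A + b) (h3 : C ≤ c) (h4 : c ≤ C + b) :
    |a / (c + a) - A / (A + C)| ≤ b / (A + C) := by
  have hca : 0 < c + a := by linarith
  have hAC : 0 < A + C := by linarith
  rw [abs_le]
  constructor
  · rw [div_sub_div _ _ (ne_of_gt hca) (ne_of_gt hAC), ← neg_div,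
      div_le_div_iff₀ hAC (by positivity)]
    have hnum : -(b * (c + a)) ≤ a * (A + C) - (c + a) * A := by
      nlinarith [mul_nonneg hA.le (by linarith : (0:ℝ) ≤ C + b - c),
        mul_nonneg (sub_nonneg.2 h1) hC.le,
        mul_nonneg hb (by linarith : (0:ℝ) ≤ c + a - A)]
    nlinarith [mul_le_mul_of_nonneg_right hnum hAC.le]
  · rw [div_sub_div _ _ (ne_of_gt hca) (ne_of_gt hAC), div_le_div_iff₀ (by positivity) hAC]
    have hnum : a * (A + C) - (c + a) * A ≤ b * (c + a) := by
      nlinarith [mul_nonneg (by linarith : (0:ℝ) ≤ A + b - a) hC.le,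
        mul_nonneg hA.le (by linarith : (0:ℝ) ≤ c - C),
        mul_nonneg hb (by linarith : (0:ℝ) ≤ a)]
    nlinarith [mul_le_mul_of_nonneg_right hnum hAC.le]

theorem stmt13 :
    (∀ x : ℝ, 0 < x →
      1 / x ^ 2 ≤ trigamma x ∧
      trigamma x ≤ 1 / x ^ 2 * (1 + (Real.pi ^ 2 / 6) * x ^ 2)) ∧
    (∀ α : ℝ, 0 < α → ∀ ρ ∈ Set.Ioo (0 : ℝ) 1,
      |trigamma (α * ρ) / (trigamma (α * (1 - ρ)) + trigamma (α * ρ))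
          - (1 - ρ) ^ 2 / (ρ ^ 2 + (1 - ρ) ^ 2)|
        ≤ (Real.pi ^ 2 / 3) * α ^ 2) := by
  constructor
  · intro x hx
    obtain ⟨h1, h2⟩ := trigamma_bounds hx
    refine ⟨h1, ?_⟩
    have hx2 : x ^ 2 ≠ 0 := by positivity
    calc trigamma x ≤ 1 / x ^ 2 + Real.pi ^ 2 / 6 := h2
      _ = 1 / x ^ 2 * (1 + (Real.pi ^ 2 / 6) * x ^ 2) := by field_simp
  · intro α hα ρ hρ
    obtain ⟨hρ0, hρ1⟩ := hρ
    set x := α * ρ with hxdef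
    set y := α * (1 - ρ) with hydef
    have hx : 0 < x := by positivity
    have hy : 0 < y := mul_pos hα (by linarith)
    obtain ⟨ha1, ha2⟩ := trigamma_bounds hx
    obtain ⟨hc1, hc2⟩ := trigamma_bounds hy
    have hb : (0:ℝ) ≤ Real.pi ^ 2 / 6 := by positivity
    have hA : 0 < 1 / x ^ 2 := by positivity
    have hC : 0 < 1 / y ^ 2 := by positivity
    have hk := key (1 / x ^ 2) (1 / y ^ 2) (trigamma x) (trigamma y) (Real.pi ^ 2 / 6)
      hA hC hb ha1 ha2 hc1 hc2
    have heq : (1 / x ^ 2) / (1 / x ^ 2 + 1 / y ^ 2) = (1 - ρ) ^ 2 / (ρ ^ 2 + (1 - ρ) ^ 2) := by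
      rw [hxdef, hydef, div_eq_div_iff (by positivity) (by nlinarith)]
      field_simp
      ring
    rw [heq] at hk
    refine hk.trans ?_
    have h1 : 1 / α ^ 2 ≤ 1 / x ^ 2 + 1 / y ^ 2 := by
      have : 1 / α ^ 2 ≤ 1 / x ^ 2 := by
        apply one_div_le_one_div_of_le (by positivity)
        nlinarith
      linarith
    calc Real.pi ^ 2 / 6 / (1 / x ^ 2 + 1 / y ^ 2)
        ≤ Real.pi ^ 2 / 6 / (1 / α ^ 2) := by
          apply div_le_div_of_nonneg_left hb (by positivity) h1
      _ = Real.pi ^ 2 / 6 * α ^ 2 := by field_simp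
      _ ≤ Real.pi ^ 2 / 3 * α ^ 2 := by nlinarith [Real.pi_pos]
end
end

section
/- (Conservation of logarithmic slope for the discrete SHE.) Let (W_x)_{x∈ℤ²} be strictly positive weights with lim_{|k|→∞} |k|^{-1} log W_{(k,t−k)} = 0 for every t ∈ ℤ, and let Z: ℤ² → ℝ_{>0} satisfy Z(x) = W_x[Z(x−e₁)+Z(x−e₂)] for all x on levels above t. If lim_{|k|→∞} k^{-1} log Z(k, t−k) = λ ∈ [−∞,∞] on level t, then lim_{|k|→∞} k^{-1} log Z(k, t+1−k) = λ on level t+1. -/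
open Filter Topology

noncomputable section

/-- The standard basis vector `e₁ = (1,0)` of `ℤ²`. -/
def e1 : ℤ × ℤ := (1, 0)

/-- The standard basis vector `e₂ = (0,1)` of `ℤ²`. -/
def e2 : ℤ × ℤ := (0, 1)

lemma coe_tendsto_top_iff {α : Type*} {l : Filter α} {u : α → ℝ} :
    Tendsto (fun k => ((u k : ℝ) : EReal)) l (nhds ⊤) ↔ Tendsto u l atTop := by
  rw [EReal.tendsto_nhds_top_iff_real, tendsto_atTop]
  constructor
  · intro h b
    filter_upwards [h b] with a ha
    exact le_of_lt (by exact_mod_cast ha)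
  · intro h b
    filter_upwards [h (b + 1)] with a ha
    exact_mod_cast lt_of_lt_of_le (lt_add_one b) ha

lemma coe_tendsto_bot_iff {α : Type*} {l : Filter α} {u : α → ℝ} :
    Tendsto (fun k => ((u k : ℝ) : EReal)) l (nhds ⊥) ↔ Tendsto u l atBot := by
  rw [EReal.tendsto_nhds_bot_iff_real, tendsto_atBot]
  constructor
  · intro h b
    filter_upwards [h b] with a ha
    exact le_of_lt (by exact_mod_cast ha)
  · intro h b
    filter_upwards [h (b - 1)] with a ha
    exact_mod_cast lt_of_le_of_lt ha (sub_one_lt b)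

lemma ediff {α : Type*} {l : Filter α} {u v : α → ℝ} {lam : EReal}
    (hu : Tendsto (fun k => ((u k : ℝ) : EReal)) l (nhds lam))
    (hd : Tendsto (fun k => v k - u k) l (nhds 0)) :
    Tendsto (fun k => ((v k : ℝ) : EReal)) l (nhds lam) := by
  have hv : ∀ k, v k = u k + (v k - u k) := fun k => by ring
  induction lam using EReal.rec with
  | bot =>
    rw [coe_tendsto_bot_iff] at hu ⊢
    simpa [← hv] using hu.atBot_add (C := (0:ℝ)) hd
  | coe a =>
    rw [EReal.tendsto_coe] at hu ⊢
    simpa [← hv] using hu.add hd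
  | top =>
    rw [coe_tendsto_top_iff] at hu ⊢
    simpa [← hv] using hu.atTop_add (C := (0:ℝ)) hd

lemma emul {α : Type*} {l : Filter α} {u c : α → ℝ} {lam : EReal}
    (hu : Tendsto (fun k => ((u k : ℝ) : EReal)) l (nhds lam))
    (hc : Tendsto c l (nhds 1)) :
    Tendsto (fun k => ((u k * c k : ℝ) : EReal)) l (nhds lam) := by
  induction lam using EReal.rec with
  | bot =>
    rw [coe_tendsto_bot_iff] at hu ⊢
    exact hu.atBot_mul_pos one_pos hc
  | coe a =>
    rw [EReal.tendsto_coe] at hu ⊢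
    simpa using hu.mul hc
  | top =>
    rw [coe_tendsto_top_iff] at hu ⊢
    exact hu.atTop_mul_pos one_pos hc

theorem stmt15 (W Z : ℤ × ℤ → ℝ) (t : ℤ) (lam : EReal)
    (hW : ∀ x, 0 < W x) (hZ : ∀ x, 0 < Z x)
    (hWlim : ∀ s : ℤ,
      Tendsto (fun k : ℤ => Real.log (W (k, s - k)) / |(k : ℝ)|) atTop (nhds 0) ∧
      Tendsto (fun k : ℤ => Real.log (W (k, s - k)) / |(k : ℝ)|) atBot (nhds 0))
    (heq : ∀ x : ℤ × ℤ, t < x.1 + x.2 → Z x = W x * (Z (x - e1) + Z (x - e2)))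
    (hZt : Tendsto (fun k : ℤ => ((Real.log (Z (k, t - k)) / (k : ℝ) : ℝ) : EReal))
        atTop (nhds lam) ∧
      Tendsto (fun k : ℤ => ((Real.log (Z (k, t - k)) / (k : ℝ) : ℝ) : EReal))
        atBot (nhds lam)) :
    Tendsto (fun k : ℤ => ((Real.log (Z (k, t + 1 - k)) / (k : ℝ) : ℝ) : EReal))
      atTop (nhds lam) ∧
    Tendsto (fun k : ℤ => ((Real.log (Z (k, t + 1 - k)) / (k : ℝ) : ℝ) : EReal))
      atBot (nhds lam) := by
  obtain ⟨hW1, hW2⟩ := hWlim (t + 1)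
  obtain ⟨hZ1, hZ2⟩ := hZt
  set A : ℤ → ℝ := fun k => Z (k - 1, t - (k - 1)) with hA
  set B : ℤ → ℝ := fun k => Z (k, t - k) with hB
  set M : ℤ → ℝ := fun k => max (Real.log (A k)) (Real.log (B k)) with hM
  have hA0 : ∀ k, 0 < A k := fun k => hZ _
  have hB0 : ∀ k, 0 < B k := fun k => hZ _
  -- key identity
  have key : ∀ k : ℤ, Real.log (Z (k, t + 1 - k)) =
      Real.log (W (k, t + 1 - k)) + Real.log (A k + B k) := by
    intro k
    have h := heq (k, t + 1 - k) (by simp)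
    have hx1 : ((k, t + 1 - k) : ℤ × ℤ) - e1 = (k - 1, t - (k - 1)) := by
      simp [e1, Prod.ext_iff]; ring
    have hx2 : ((k, t + 1 - k) : ℤ × ℤ) - e2 = (k, t - k) := by
      simp [e2, Prod.ext_iff]; ring
    rw [hx1, hx2] at h
    rw [h, Real.log_mul (hW _).ne' (add_pos (hZ _) (hZ _)).ne']
  -- log of max
  have hlogmax : ∀ k, Real.log (max (A k) (B k)) = M k := by
    intro k
    rcases le_total (A k) (B k) with h | h
    · rw [max_eq_right h]
      exact (max_eq_right (Real.log_le_log (hA0 k) h)).symm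
    · rw [max_eq_left h]
      exact (max_eq_left (Real.log_le_log (hB0 k) h)).symm
  -- bound
  have hMb : ∀ k, |Real.log (A k + B k) - M k| ≤ Real.log 2 := by
    intro k
    have h1 : M k ≤ Real.log (A k + B k) := by
      apply max_le
      · exact Real.log_le_log (hA0 k) (by linarith [hB0 k])
      · exact Real.log_le_log (hB0 k) (by linarith [hA0 k])
    have h2 : Real.log (A k + B k) ≤ Real.log 2 + M k := by
      have hle : A k + B k ≤ 2 * max (A k) (B k) := by
        have := le_max_left (A k) (B k); have := le_max_right (A k) (B k); linarith
      calc Real.log (A k + B k) ≤ Real.log (2 * max (A k) (B k)) :=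
            Real.log_le_log (by linarith [hA0 k, hB0 k]) hle
        _ = Real.log 2 + M k := by
            rw [Real.log_mul two_ne_zero (lt_max_of_lt_left (hA0 k)).ne', hlogmax]
    have h3 : (0:ℝ) ≤ Real.log 2 := Real.log_nonneg (by norm_num)
    rw [abs_le]
    constructor <;> linarith
  -- difference tends to 0 (for both filters)
  have hdiff : ∀ {l : Filter ℤ},
      Tendsto (fun k : ℤ => Real.log (W (k, t + 1 - k)) / |(k : ℝ)|) l (nhds 0) →
      Tendsto (fun k : ℤ => |(k : ℝ)|) l atTop →
      Tendsto (fun k : ℤ => Real.log (Z (k, t + 1 - k)) / (k : ℝ) - M k / (k : ℝ)) l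
        (nhds 0) := by
    intro l hw habs
    rw [tendsto_zero_iff_norm_tendsto_zero]
    apply squeeze_zero (g := fun k : ℤ =>
        |Real.log (W (k, t + 1 - k))| / |(k : ℝ)| + Real.log 2 / |(k : ℝ)|)
        (fun k => norm_nonneg _)
    · intro k
      have h3 : (0:ℝ) ≤ Real.log 2 := Real.log_nonneg (by norm_num)
      by_cases hk : (k : ℝ) = 0
      · simp [hk]
      · rw [Real.norm_eq_abs, div_sub_div_same, key k, abs_div]
        have hre : Real.log (W (k, t + 1 - k)) + Real.log (A k + B k) - M k =
            Real.log (W (k, t + 1 - k)) + (Real.log (A k + B k) - M k) := by ring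
        rw [hre, ← add_div]
        refine (div_le_div_iff_of_pos_right (abs_pos.mpr hk)).mpr ?_
        calc |Real.log (W (k, t + 1 - k)) + (Real.log (A k + B k) - M k)| ≤
            |Real.log (W (k, t + 1 - k))| + |Real.log (A k + B k) - M k| := abs_add_le _ _
          _ ≤ |Real.log (W (k, t + 1 - k))| + Real.log 2 := by linarith [hMb k]
    · have h1 : Tendsto (fun k : ℤ => |Real.log (W (k, t + 1 - k))| / |(k : ℝ)|) l
          (nhds 0) := by
        have := hw.abs
        simpa [abs_div] using this
      have h2 : Tendsto (fun k : ℤ => Real.log 2 / |(k : ℝ)|) l (nhds 0) :=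
        Tendsto.div_atTop tendsto_const_nhds habs
      simpa using h1.add h2
  -- A-part limit, atTop
  have hshift1 : Tendsto (fun k : ℤ => ((Real.log (A k) / ((k : ℝ) - 1) : ℝ) : EReal))
      atTop (nhds lam) := by
    have h := hZ1.comp (tendsto_atTop_add_const_right atTop (-1 : ℤ) tendsto_id)
    refine h.congr fun k => ?_
    have hk : (k : ℤ) + -1 = k - 1 := by ring
    simp only [Function.comp_apply, id_eq, hk]
    push_cast
    rfl
  have hshift2 : Tendsto (fun k : ℤ => ((Real.log (A k) / ((k : ℝ) - 1) : ℝ) : EReal))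
      atBot (nhds lam) := by
    have h := hZ2.comp (tendsto_atBot_add_const_right atBot (-1 : ℤ) tendsto_id)
    refine h.congr fun k => ?_
    have hk : (k : ℤ) + -1 = k - 1 := by ring
    simp only [Function.comp_apply, id_eq, hk]
    push_cast
    rfl
  -- the correction factor tends to 1
  have honeover : ∀ {l : Filter ℤ}, Tendsto (fun k : ℤ => |(k : ℝ)|) l atTop →
      Tendsto (fun k : ℤ => ((k : ℝ) - 1) / (k : ℝ)) l (nhds 1) := by
    intro l habs
    have h0 : Tendsto (fun k : ℤ => 1 / (k : ℝ)) l (nhds 0) := by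
      rw [tendsto_zero_iff_norm_tendsto_zero]
      have : Tendsto (fun k : ℤ => 1 / |(k : ℝ)|) l (nhds 0) :=
        Tendsto.div_atTop tendsto_const_nhds habs
      refine this.congr fun k => ?_
      simp [Real.norm_eq_abs, abs_div]
    have : Tendsto (fun k : ℤ => 1 - 1 / (k : ℝ)) l (nhds (1 - 0)) :=
      tendsto_const_nhds.sub h0
    rw [sub_zero] at this
    refine Tendsto.congr' ?_ this
    filter_upwards [habs.eventually_gt_atTop 0] with k hk
    have hk0 : (k : ℝ) ≠ 0 := by
      intro h; rw [h] at hk; simp at hk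
    field_simp
  have habsTop : Tendsto (fun k : ℤ => |(k : ℝ)|) atTop atTop :=
    tendsto_abs_atTop_atTop.comp tendsto_intCast_atTop_atTop
  have habsBot : Tendsto (fun k : ℤ => |(k : ℝ)|) atBot atTop :=
    tendsto_abs_atBot_atTop.comp (tendsto_intCast_atBot_iff.mpr tendsto_id)
  -- eventual equality of (log A)/(k-1) * ((k-1)/k) and (log A)/k
  have hAeq : ∀ k : ℤ, (k : ℝ) - 1 ≠ 0 →
      Real.log (A k) / ((k : ℝ) - 1) * (((k : ℝ) - 1) / (k : ℝ)) =
        Real.log (A k) / (k : ℝ) := by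
    intro k hk1
    rw [div_mul_div_comm, mul_comm (Real.log (A k)) ((k:ℝ) - 1),
      mul_div_mul_left _ _ hk1]
  have hAtop : Tendsto (fun k : ℤ => ((Real.log (A k) / (k : ℝ) : ℝ) : EReal))
      atTop (nhds lam) := by
    have h := emul hshift1 (honeover habsTop)
    refine h.congr' ?_
    filter_upwards [eventually_ge_atTop (2 : ℤ)] with k hk
    have hk1 : (k : ℝ) - 1 ≠ 0 := by
      have : (2 : ℝ) ≤ (k : ℝ) := by exact_mod_cast hk
      intro h; linarith [this]
    exact congrArg _ (hAeq k hk1)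
  have hAbot : Tendsto (fun k : ℤ => ((Real.log (A k) / (k : ℝ) : ℝ) : EReal))
      atBot (nhds lam) := by
    have h := emul hshift2 (honeover habsBot)
    refine h.congr' ?_
    filter_upwards [eventually_le_atBot (-1 : ℤ)] with k hk
    have hk1 : (k : ℝ) - 1 ≠ 0 := by
      have : (k : ℝ) ≤ -1 := by exact_mod_cast hk
      intro h; linarith [this]
    exact congrArg _ (hAeq k hk1)
  -- M/k limits
  have hMtop : Tendsto (fun k : ℤ => ((M k / (k : ℝ) : ℝ) : EReal)) atTop (nhds lam) := by
    have h := hAtop.max hZ1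
    rw [max_self] at h
    refine h.congr' ?_
    filter_upwards [eventually_ge_atTop (1 : ℤ)] with k hk
    have hk0 : (0 : ℝ) ≤ (k : ℝ) := by exact_mod_cast (by omega : (0 : ℤ) ≤ k)
    rw [← EReal.coe_strictMono.monotone.map_max, max_div_div_right hk0]
  have hMbot : Tendsto (fun k : ℤ => ((M k / (k : ℝ) : ℝ) : EReal)) atBot (nhds lam) := by
    have h := hAbot.min hZ2
    rw [min_self] at h
    refine h.congr' ?_
    filter_upwards [eventually_le_atBot (-1 : ℤ)] with k hk
    have hk0 : (k : ℝ) ≤ 0 := by exact_mod_cast (by omega : k ≤ (0 : ℤ))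
    rw [← EReal.coe_strictMono.monotone.map_min, min_div_div_right_of_nonpos hk0]
  exact ⟨ediff hMtop (hdiff hW1 habsTop), ediff hMbot (hdiff hW2 habsBot)⟩
end
end

section
/- (Gibbs measures from positive eternal solutions.) Let Z: ℤ² → ℝ_{>0} satisfy Z(x) = W_x[Z(x−e₁)+Z(x−e₂)] for all x ∈ ℤ², with strictly positive weights (W_x). For a root v on level n, define on nearest-neighbor up-right paths x_{m:n} ending at v: Q_v(X_{m:n} = x_{m:n}) = (Z(x_m)/Z(v)) ∏_{i=m+1}^{n} W_{x_i}. Then: (i) these finite-dimensional marginals are consistent and define a probability measure on semi-infinite down-left paths rooted at v; (ii) conditioned on X_m = x_m, the law of X_{m:n} under Q_v equals the finite-volume polymer measure Q_{x_m,v}(x_{m:n}) = (∏_{i=m+1}^n W_{x_i})/Z_{x_m,v}; (iii) the family (Q_v)_{v∈ℤ²} is consistent: Q_v conditioned to pass through x_m induces Q_{x_m} on the earlier portion of the path. -/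
noncomputable section

/-- The level (anti-diagonal index) of a lattice point. -/
def lev (x : ℤ × ℤ) : ℤ := x.1 + x.2

/-- The weight of a path between levels `m` and `n`, collecting the weights at
steps `m+1, …, n` (the weight at the initial level is excluded). -/
def pw (W : ℤ × ℤ → ℝ) (m n : ℤ) (p : ℤ → ℤ × ℤ) : ℝ :=
  ∏ i ∈ Finset.Ioc m n, W (p i)

/-- `p` is an up-right nearest-neighbor path from `u` to `v`, recorded as a function
on all of `ℤ` that is frozen at `u` before `lev u` and at `v` after `lev v`. -/
def IsPath (u v : ℤ × ℤ) (p : ℤ → ℤ × ℤ) : Prop :=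
  p (lev u) = u ∧ p (lev v) = v ∧
  (∀ i : ℤ, lev u < i → i ≤ lev v → (p i = p (i - 1) + e1 ∨ p i = p (i - 1) + e2)) ∧
  (∀ i : ℤ, i ≤ lev u → p i = u) ∧ (∀ i : ℤ, lev v ≤ i → p i = v)

/-- Point-to-point polymer partition function
`Z_{u,v} = Σ_{paths u→v} ∏_{i=lev u+1}^{lev v} W_{x_i}`. -/
def PF (W : ℤ × ℤ → ℝ) (u v : ℤ × ℤ) : ℝ :=
  ∑' p : {p : ℤ → ℤ × ℤ // IsPath u v p}, pw W (lev u) (lev v) p.1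

/-- Backward extension of a path starting at `x` by one step to `x - r`. -/
def extPath (x r : ℤ × ℤ) (p : ℤ → ℤ × ℤ) : ℤ → ℤ × ℤ :=
  fun i => if i < lev x then x - r else p i

/-- Concatenation at level `m`: follow `p` up to level `m`, then `q` afterwards. -/
def glue (m : ℤ) (p q : ℤ → ℤ × ℤ) : ℤ → ℤ × ℤ :=
  fun i => if i ≤ m then p i else q i

/-- The finite-dimensional weight that the Gibbs measure rooted at `v`, built from the
positive eternal solution `Z`, assigns to a path segment from level `m` to `lev v`. -/

lemma isPath_lev_le {u v : ℤ × ℤ} {p : ℤ → ℤ × ℤ} (h : IsPath u v p) : lev u ≤ lev v := by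
  by_contra hlt
  push_neg at hlt
  have h1 : p (lev u) = v := h.2.2.2.2 (lev u) (le_of_lt hlt)
  rw [h.1] at h1
  rw [h1] at hlt
  exact lt_irrefl _ hlt

lemma lev_sub (a b : ℤ × ℤ) : lev (a - b) = lev a - lev b := by
  simp [lev, Prod.fst_sub, Prod.snd_sub]; ring

lemma lev_e1 : lev e1 = 1 := by simp [lev, e1]
lemma lev_e2 : lev e2 = 1 := by simp [lev, e2]

lemma Ioc_pred (m : ℤ) : Finset.Ioc (m - 1) m = {m} := by
  ext i; simp only [Finset.mem_Ioc, Finset.mem_singleton]; omega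


lemma prod_Ioc_split (f : ℤ → ℝ) {a b c : ℤ} (hab : a ≤ b) (hbc : b ≤ c) :
    ∏ i ∈ Finset.Ioc a c, f i = (∏ i ∈ Finset.Ioc a b, f i) * ∏ i ∈ Finset.Ioc b c, f i := by
  rw [← Finset.Ioc_union_Ioc_eq_Ioc hab hbc, Finset.prod_union]
  rw [Finset.disjoint_left]; intro i h1 h2; simp only [Finset.mem_Ioc] at h1 h2; omega

lemma extPath_isPath {x v : ℤ × ℤ} {p : ℤ → ℤ × ℤ} (hp : IsPath x v p)
    {r : ℤ × ℤ} (hr : r = e1 ∨ r = e2) : IsPath (x - r) v (extPath x r p) := by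
  have hxv : lev x ≤ lev v := isPath_lev_le hp
  have hlev : lev (x - r) = lev x - 1 := by
    rcases hr with h | h <;> rw [h, lev_sub] <;> simp [lev_e1, lev_e2]
  refine ⟨?_, ?_, ?_, ?_, ?_⟩
  · rw [hlev]; simp only [extPath]; rw [if_pos (by omega)]
  · simp only [extPath]; rw [if_neg (by omega)]; exact hp.2.1
  · intro i hi1 hi2
    rw [hlev] at hi1
    simp only [extPath]
    rcases eq_or_lt_of_le (show lev x ≤ i by omega) with heq | hlt
    · rw [if_neg (by omega), if_pos (by omega), ← heq, hp.1]
      rcases hr with h | h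
      · left; rw [h]; abel
      · right; rw [h]; abel
    · rw [if_neg (by omega), if_neg (by omega)]
      exact hp.2.2.1 i hlt hi2
  · intro i hi; rw [hlev] at hi; simp only [extPath]; rw [if_pos (by omega)]
  · intro i hi; simp only [extPath]; rw [if_neg (by omega)]
    exact hp.2.2.2.2 i hi

lemma pw_extPath {x v : ℤ × ℤ} {p : ℤ → ℤ × ℤ} (hp : IsPath x v p)
    (W : ℤ × ℤ → ℝ) (r : ℤ × ℤ) :
    pw W (lev x - 1) (lev v) (extPath x r p) = W x * pw W (lev x) (lev v) p := by
  have hxv : lev x ≤ lev v := isPath_lev_le hp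
  unfold pw
  rw [prod_Ioc_split _ (show lev x - 1 ≤ lev x by omega) hxv, Ioc_pred, Finset.prod_singleton]
  congr 1
  · simp only [extPath]; rw [if_neg (by omega), hp.1]
  · apply Finset.prod_congr rfl
    intro i hi
    simp only [Finset.mem_Ioc] at hi
    simp only [extPath]; rw [if_neg (by omega)]

def Qval (Z W : ℤ × ℤ → ℝ) (v : ℤ × ℤ) (m : ℤ) (p : ℤ → ℤ × ℤ) : ℝ :=
  Z (p m) / Z v * pw W m (lev v) p

theorem stmt16 (W Z : ℤ × ℤ → ℝ) (hW : ∀ x, 0 < W x) (hZ : ∀ x, 0 < Z x)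
    (heq : ∀ x : ℤ × ℤ, Z x = W x * (Z (x - e1) + Z (x - e2))) :
    -- (i) total mass one at the root, and backward consistency of the marginals
    (∀ (v : ℤ × ℤ) (p : ℤ → ℤ × ℤ), IsPath v v p → Qval Z W v (lev v) p = 1) ∧
    (∀ (v x : ℤ × ℤ) (p : ℤ → ℤ × ℤ), IsPath x v p →
      IsPath (x - e1) v (extPath x e1 p) ∧
      IsPath (x - e2) v (extPath x e2 p) ∧
      Qval Z W v (lev x - 1) (extPath x e1 p) + Qval Z W v (lev x - 1) (extPath x e2 p)
        = Qval Z W v (lev x) p) ∧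
    -- (ii) the marginal at a point, and the conditioned law is the finite polymer measure
    (∀ v x : ℤ × ℤ,
      (∑' q : {q : ℤ → ℤ × ℤ // IsPath x v q}, Qval Z W v (lev x) q.1)
        = Z x / Z v * PF W x v) ∧
    (∀ (v x : ℤ × ℤ) (p : ℤ → ℤ × ℤ), IsPath x v p →
      Qval Z W v (lev x) p * PF W x v
        = (Z x / Z v * PF W x v) * pw W (lev x) (lev v) p) ∧
    -- (iii) consistency of the family: conditioning `Q_v` on passing through `x`
    -- induces `Q_x` on the earlier portion of the path
    (∀ (v x u : ℤ × ℤ) (p : ℤ → ℤ × ℤ), IsPath u x p → x ≤ v →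
      (∑' q : {q : ℤ → ℤ × ℤ // IsPath x v q}, Qval Z W v (lev u) (glue (lev x) p q.1))
        = Qval Z W x (lev u) p * (Z x / Z v * PF W x v)) := by
  
  have key : ∀ (v x : ℤ × ℤ) (p : ℤ → ℤ × ℤ), IsPath x v p →
      Qval Z W v (lev x - 1) (extPath x e1 p) + Qval Z W v (lev x - 1) (extPath x e2 p)
        = Qval Z W v (lev x) p := by
    intro v x p hp
    have h1 : (extPath x e1 p) (lev x - 1) = x - e1 := by
      simp only [extPath]; rw [if_pos (by omega)]
    have h2 : (extPath x e2 p) (lev x - 1) = x - e2 := by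
      simp only [extPath]; rw [if_pos (by omega)]
    unfold Qval
    rw [h1, h2, pw_extPath hp, pw_extPath hp, hp.1]
    have hv := (hZ v).ne'
    field_simp
    rw [heq x]; ring
  refine ⟨?_, ?_, ?_, ?_, ?_⟩
  · intro v p hp
    unfold Qval pw
    rw [hp.1, Finset.Ioc_self, Finset.prod_empty, mul_one, div_self (hZ v).ne']
  · intro v x p hp
    exact ⟨extPath_isPath hp (Or.inl rfl), extPath_isPath hp (Or.inr rfl), key v x p hp⟩
  · intro v x
    have : ∀ q : {q : ℤ → ℤ × ℤ // IsPath x v q},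
        Qval Z W v (lev x) q.1 = Z x / Z v * pw W (lev x) (lev v) q.1 := by
      intro q; unfold Qval; rw [q.2.1]
    rw [tsum_congr this, tsum_mul_left, PF]
  · intro v x p hp
    unfold Qval
    rw [hp.1]; ring
  · intro v x u p hp hxv
    have hux : lev u ≤ lev x := isPath_lev_le hp
    have hxv' : lev x ≤ lev v := by
      have h1 : x.1 ≤ v.1 := hxv.1
      have h2 : x.2 ≤ v.2 := hxv.2
      unfold lev; omega
    have hglue : ∀ q : {q : ℤ → ℤ × ℤ // IsPath x v q},
        Qval Z W v (lev u) (glue (lev x) p q.1)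
          = (Z u / Z v * pw W (lev u) (lev x) p) * pw W (lev x) (lev v) q.1 := by
      intro q
      unfold Qval
      have hgu : glue (lev x) p q.1 (lev u) = u := by
        simp only [glue]; rw [if_pos hux, hp.1]
      have hpw : pw W (lev u) (lev v) (glue (lev x) p q.1)
          = pw W (lev u) (lev x) p * pw W (lev x) (lev v) q.1 := by
        unfold pw
        rw [prod_Ioc_split _ hux hxv']
        congr 1
        · apply Finset.prod_congr rfl
          intro i hi
          simp only [Finset.mem_Ioc] at hi
          simp only [glue]; rw [if_pos hi.2]
        · apply Finset.prod_congr rfl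
          intro i hi
          simp only [Finset.mem_Ioc] at hi
          simp only [glue]; rw [if_neg (by omega)]
      rw [hgu, hpw]; ring
    rw [tsum_congr hglue, tsum_mul_left]
    unfold Qval PF
    rw [hp.1]
    have h1 := (hZ x).ne'
    have h2 := (hZ v).ne'
    field_simp
end
end
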